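/- arXiv:1810.09014 — 2 statements merged into one kernel-verified Lean document; each statement's English description precedes it below -/
import Mathlib

section
/- Let A = diag(-1/(R₁C₁), -1/(R₂C₂), 0) with R₁,C₁,R₂,C₂ > 0, K = (0, 0, k₃)ᵀ with k₃ > 0, and T(t) = (-1, -1, g(t)) with g(t) ∈ [g_min, g_max], 0 < g_min. Then the error system x̆'(t) = (A - K·T(t))·x̆(t) is globally exponentially stable: there exist constants M ≥ 1, λ > 0 such that ‖x̆(t)‖ ≤ M·e^{-λt}·‖x̆(0)‖ for all t ≥ 0. -/
/-!
With `a = 1/(R₁C₁)`, `b = 1/(R₂C₂)` and `μ = min a b`, the error dynamics read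
`x₀' = -a x₀`, `x₁' = -b x₁`, `x₂' = k₃ (x₀ + x₁ - g x₂)`. Take the Lyapunov function
`V = x₀² + x₁² + ε x₂²` with `2 ε k₃ = μ g_min`: by Young's inequality the coupling terms
`μ g_min x₂ xᵢ` are absorbed by `μ xᵢ² + μ g_min² x₂² / 4`, and `g ≥ g_min` leaves
`V' ≤ -c V` with `c = min μ (k₃ g_min)`. Grönwall gives `V(t) ≤ V(0) e^{-ct}`, and since `V` is
comparable to `‖x‖²` this is exponential decay of `‖x‖` with rate `c / 2`.
-/

open Real

theorem le_mul_exp_of_hasDerivAt_le_neg_mul {V V' : ℝ → ℝ} {c t : ℝ}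
    (hV : ∀ s, HasDerivAt V (V' s) s) (hle : ∀ s, V' s ≤ -c * V s) (ht : 0 ≤ t) :
    V t ≤ V 0 * exp (-c * t) := by
  have h := le_gronwallBound_of_liminf_deriv_right_le (ε := 0)
    (fun s _ => (hV s).continuousAt.continuousWithinAt)
    (fun s _ _ hr => (hV s).hasDerivWithinAt.liminf_right_slope_le hr) le_rfl
    (fun s _ => (add_zero (-c * V s)).symm ▸ hle s) t ⟨ht, le_rfl⟩
  simpa [gronwallBound_ε0] using h

theorem norm_le_of_lyapunov_decay {E : Type*} [SeminormedAddCommGroup E] {x₀ x : E}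
    {V₀ V α β c t : ℝ} (hα : 0 < α) (hβ : 0 ≤ β) (hlow : α * ‖x‖ ^ 2 ≤ V)
    (hup : V₀ ≤ β * ‖x₀‖ ^ 2) (hdecay : V ≤ V₀ * exp (-c * t)) :
    ‖x‖ ≤ √(β / α) * exp (-(c / 2) * t) * ‖x₀‖ := by
  have hexp : exp (-(c / 2) * t) ^ 2 = exp (-c * t) := by
    rw [← exp_nat_mul]; ring_nf
  have hsq : ‖x‖ ^ 2 ≤ (√(β / α) * exp (-(c / 2) * t) * ‖x₀‖) ^ 2 := by
    rw [mul_pow, mul_pow, sq_sqrt (by positivity), hexp, div_mul_eq_mul_div,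
      div_mul_eq_mul_div, le_div_iff₀' hα]
    calc α * ‖x‖ ^ 2 ≤ V₀ * exp (-c * t) := hlow.trans hdecay
      _ ≤ β * ‖x₀‖ ^ 2 * exp (-c * t) := by gcongr
      _ = _ := by ring
  exact (pow_le_pow_iff_left₀ (norm_nonneg _) (by positivity) two_ne_zero).mp hsq

def weightedInner (ε : ℝ) (v w : Fin 3 → ℝ) : ℝ :=
  v 0 * w 0 + v 1 * w 1 + ε * (v 2 * w 2)

theorem hasDerivAt_weightedInner_self {ε t : ℝ} {x : ℝ → Fin 3 → ℝ} {x' : Fin 3 → ℝ}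
    (hx : ∀ i, HasDerivAt (fun s => x s i) (x' i) t) :
    HasDerivAt (fun s => weightedInner ε (x s) (x s)) (2 * weightedInner ε (x t) x') t := by
  have h := (((hx 0).mul (hx 0)).add ((hx 1).mul (hx 1))).add (((hx 2).mul (hx 2)).const_mul ε)
  exact h.congr_deriv (by unfold weightedInner; ring)

theorem min_one_mul_sq_norm_le_weightedInner_self {ε : ℝ} (hε : 0 ≤ ε) (v : Fin 3 → ℝ) :
    min 1 ε * ‖v‖ ^ 2 ≤ weightedInner ε v v := by
  obtain ⟨i, -, hi⟩ := Finset.exists_mem_eq_sup Finset.univ Finset.univ_nonempty (‖v ·‖₊)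
  have hvi : ‖v‖ ^ 2 = v i ^ 2 := by
    rw [Pi.norm_def, hi, coe_nnnorm, norm_eq_abs, sq_abs]
  have h1 : min 1 ε ≤ 1 := min_le_left _ _
  have hε' : min 1 ε ≤ ε := min_le_right _ _
  rw [hvi]
  unfold weightedInner
  fin_cases i <;> simp only [Fin.zero_eta, Fin.mk_one, Fin.reduceFinMk] <;>
    nlinarith [sq_nonneg (v 0), sq_nonneg (v 1), sq_nonneg (v 2), mul_nonneg hε (sq_nonneg (v 2))]

theorem weightedInner_self_le_two_add_mul_sq_norm {ε : ℝ} (hε : 0 ≤ ε) (v : Fin 3 → ℝ) :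
    weightedInner ε v v ≤ (2 + ε) * ‖v‖ ^ 2 := by
  have hcomp (i : Fin 3) : v i * v i ≤ ‖v‖ ^ 2 := by
    rw [← sq, ← sq_abs, ← norm_eq_abs]
    exact pow_le_pow_left₀ (norm_nonneg _) (norm_le_pi_norm v i) 2
  unfold weightedInner
  nlinarith [hcomp 0, hcomp 1, mul_le_mul_of_nonneg_left (hcomp 2) hε]

theorem diagonal_sub_vecMulVec_mulVec (a b k g : ℝ) (v : Fin 3 → ℝ) :
    (Matrix.diagonal ![-a, -b, 0] - Matrix.vecMulVec ![0, 0, k] ![-1, -1, g]).mulVec v =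
      ![-a * v 0, -b * v 1, k * (v 0 + v 1 - g * v 2)] := by
  ext i
  rw [Matrix.sub_mulVec, Pi.sub_apply, Matrix.mulVec_diagonal, Matrix.vecMulVec_mulVec]
  fin_cases i <;> simp [dotProduct, Fin.sum_univ_three]
  ring

theorem two_mul_weightedInner_errorField_le {a b k g gmin μ ε c : ℝ}
    (hμa : μ ≤ a) (hμb : μ ≤ b) (hμ : 0 ≤ μ) (hgmin : 0 ≤ gmin) (hg : gmin ≤ g)
    (hε : 0 ≤ ε) (hεk : 2 * ε * k = μ * gmin) (hcμ : c ≤ μ) (hck : c ≤ k * gmin)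
    (v : Fin 3 → ℝ) :
    2 * weightedInner ε v ![-a * v 0, -b * v 1, k * (v 0 + v 1 - g * v 2)] ≤
      -c * weightedInner ε v v := by
  have hcε : c * ε ≤ μ * gmin ^ 2 / 2 := by nlinarith
  have hcoupling : 2 * (ε * (v 2 * (k * (v 0 + v 1 - g * v 2)))) =
      μ * gmin * (v 2 * v 0) + μ * gmin * (v 2 * v 1) - μ * gmin * g * v 2 ^ 2 := by
    rw [← hεk]; ring
  simp only [weightedInner, Matrix.cons_val_zero, Matrix.cons_val_one, Matrix.cons_val_two,
    Matrix.head_cons, Matrix.tail_cons]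
  -- Young: `gmin x₂ xᵢ ≤ xᵢ² + gmin² x₂² / 4`
  nlinarith [mul_nonneg hμ (sq_nonneg (v 0 - gmin * v 2 / 2)),
    mul_nonneg hμ (sq_nonneg (v 1 - gmin * v 2 / 2)),
    mul_nonneg (mul_nonneg hμ hgmin) (mul_nonneg (sub_nonneg.2 hg) (sq_nonneg (v 2))),
    mul_le_mul_of_nonneg_right hcε (sq_nonneg (v 2)),
    mul_nonneg (sub_nonneg.2 (hcμ.trans hμa)) (sq_nonneg (v 0)),
    mul_nonneg (sub_nonneg.2 (hcμ.trans hμb)) (sq_nonneg (v 1)),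
    mul_nonneg (sub_nonneg.2 hμa) (sq_nonneg (v 0)),
    mul_nonneg (sub_nonneg.2 hμb) (sq_nonneg (v 1))]

/-- Global exponential stability of the observer error system `x̆' = (A - K·T(t))·x̆`. -/
theorem stmt_3 (R1 C1 R2 C2 k3 gmin gmax : ℝ)
    (hR1 : 0 < R1) (hC1 : 0 < C1) (hR2 : 0 < R2) (hC2 : 0 < C2)
    (hk3 : 0 < k3) (hgmin : 0 < gmin)
    (g : ℝ → ℝ) (hg : ∀ t, g t ∈ Set.Icc gmin gmax)
    (A : Matrix (Fin 3) (Fin 3) ℝ)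
    (hA : A = Matrix.diagonal ![-(1 / (R1 * C1)), -(1 / (R2 * C2)), 0])
    (K : Fin 3 → ℝ) (hK : K = ![0, 0, k3])
    (T : ℝ → Fin 3 → ℝ) (hT : ∀ t, T t = ![-1, -1, g t])
    (x : ℝ → Fin 3 → ℝ)
    (hode : ∀ t i, HasDerivAt (fun s => x s i)
      ((Matrix.mulVec (A - Matrix.vecMulVec K (T t)) (x t)) i) t) :
    ∃ M ≥ (1 : ℝ), ∃ lam > (0 : ℝ), ∀ t, 0 ≤ t →
      ‖x t‖ ≤ M * Real.exp (-lam * t) * ‖x 0‖ := by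
  set a := 1 / (R1 * C1)
  set b := 1 / (R2 * C2)
  set μ := min a b
  set ε := μ * gmin / (2 * k3)
  set c := min μ (k3 * gmin)
  have hμ : 0 < μ := lt_min (by positivity) (by positivity)
  have hε : 0 < ε := by positivity
  have hc : 0 < c := lt_min hμ (by positivity)
  have hεk : 2 * ε * k3 = μ * gmin := by simp only [ε]; field_simp
  have hx (t : ℝ) (i : Fin 3) : HasDerivAt (fun s => x s i)
      (![-a * x t 0, -b * x t 1, k3 * (x t 0 + x t 1 - g t * x t 2)] i) t := by
    simpa only [hA, hK, hT, ← diagonal_sub_vecMulVec_mulVec] using hode t i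
  have hdecay (t : ℝ) (ht : 0 ≤ t) :
      weightedInner ε (x t) (x t) ≤ weightedInner ε (x 0) (x 0) * exp (-c * t) :=
    le_mul_exp_of_hasDerivAt_le_neg_mul (fun s => hasDerivAt_weightedInner_self (hx s))
      (fun s => two_mul_weightedInner_errorField_le (min_le_left a b) (min_le_right a b) hμ.le
        hgmin.le (hg s).1 hε.le hεk (min_le_left _ _) (min_le_right _ _) (x s)) ht
  refine ⟨√((2 + ε) / min 1 ε), ?_, c / 2, half_pos hc, fun t ht => ?_⟩
  · rw [ge_iff_le, one_le_sqrt, one_le_div (lt_min one_pos hε)]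
    linarith [min_le_left 1 ε]
  · exact norm_le_of_lyapunov_decay (lt_min one_pos hε) (by positivity)
      (min_one_mul_sq_norm_le_weightedInner_self hε.le _)
      (weightedInner_self_le_two_add_mul_sq_norm hε.le _)
      (hdecay t ht)
end

section
/- With k₁ = k₂ = 0, the error system decouples: x̆₁(t) = x̆₁(0)e^{-t/(R₁C₁)}, x̆₂(t) = x̆₂(0)e^{-t/(R₂C₂)}, and x̆₃ satisfies x̆₃'(t) = -k₃·g(t)·x̆₃(t) + k₃·(x̆₁(t) + x̆₂(t)). If g(t) ≥ g_min > 0 and k₃ > 0, then x̆₃(t) → 0 as t → ∞. -/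
/-!
For `k₁ = k₂ = 0` the RC errors solve `x' = -a x`, so `x t * exp (a t)` is constant.
For the SoC error, `V = x̆₃²` is a Lyapunov function with a vanishing forcing term:
`V' ≤ -b V + ε` with `b = k₃ g_min` and `ε = (k₃ (x̆₁ + x̆₂))² / b → 0`.
Grönwall's inequality on `[T, t]` gives `V t ≤ V T e^{-b (t - T)} + sup_{s ≥ T} ε s / b`,
which is eventually as small as we like.
-/

open Real Filter Topology

theorem eq_mul_exp_neg_mul_of_hasDerivAt {y : ℝ → ℝ} {a : ℝ}
    (hy : ∀ t, HasDerivAt y (-a * y t) t) (t : ℝ) :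
    y t = y 0 * exp (-(a * t)) := by
  have hconst : ∀ s, HasDerivAt (fun s => y s * exp (a * s)) 0 s := fun s =>
    ((hy s).mul ((hasDerivAt_id' s).const_mul a).exp).congr_deriv (by ring)
  have h := is_const_of_deriv_eq_zero (fun s => (hconst s).differentiableAt)
    (fun s => (hconst s).deriv) t 0
  rw [mul_zero, exp_zero, mul_one] at h
  rw [exp_neg, ← h, mul_inv_cancel_right₀ (exp_pos _).ne']

theorem le_mul_exp_add_div_of_deriv_le {f f' : ℝ → ℝ} {b η T t : ℝ} (hb : 0 < b) (hη : 0 ≤ η)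
    (hf : ∀ s, HasDerivAt f (f' s) s) (hbound : ∀ s, T ≤ s → f' s ≤ -b * f s + η)
    (hTt : T ≤ t) :
    f t ≤ f T * exp (-b * (t - T)) + η / b := by
  have hcont : Continuous f := continuous_iff_continuousAt.2 fun s => (hf s).continuousAt
  have hgron := le_gronwallBound_of_liminf_deriv_right_le hcont.continuousOn
    (fun s _ r hr => (hf s).hasDerivWithinAt.liminf_right_slope_le hr) le_rfl
    (fun s hs => hbound s hs.1) t ⟨hTt, le_rfl⟩
  rw [gronwallBound_of_K_ne_0 (neg_ne_zero.2 hb.ne')] at hgron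
  have hforced : η / -b * (exp (-b * (t - T)) - 1) ≤ η / b := by
    rw [div_neg, neg_mul, ← mul_neg, neg_sub]
    exact mul_le_of_le_one_right (div_nonneg hη hb.le) (by linarith [exp_pos (-b * (t - T))])
  linarith

theorem tendsto_zero_of_deriv_le_neg_mul_add {f f' ε : ℝ → ℝ} {b : ℝ} (hb : 0 < b)
    (hf_nonneg : ∀ t, 0 ≤ f t) (hf : ∀ t, HasDerivAt f (f' t) t)
    (hbound : ∀ t, f' t ≤ -b * f t + ε t) (hε : Tendsto ε atTop (𝓝 0)) :
    Tendsto f atTop (𝓝 0) := by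
  refine tendsto_order.2 ⟨fun a ha => Eventually.of_forall fun t => ha.trans_le (hf_nonneg t),
    fun a ha => ?_⟩
  obtain ⟨T, hT⟩ := eventually_atTop.1 (hε.eventually_le_const (mul_pos (half_pos ha) hb))
  have hdecay : Tendsto (fun t => f T * exp (-b * (t - T))) atTop (𝓝 0) := by
    have := (tendsto_exp_atBot.comp ((tendsto_atTop_add_const_right _ (-T) tendsto_id)
      |>.const_mul_atTop_of_neg (neg_lt_zero.2 hb))).const_mul (f T)
    simpa [sub_eq_add_neg] using this
  filter_upwards [eventually_ge_atTop T, hdecay.eventually_lt_const (half_pos ha)] with t hTt ht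
  have := le_mul_exp_add_div_of_deriv_le hb (by positivity) hf
    (fun s hs => (hbound s).trans (add_le_add_right (hT s hs) _)) hTt
  rw [mul_div_cancel_right₀ _ hb.ne'] at this
  linarith

theorem tendsto_zero_of_hasDerivAt_neg_mul_add {x p u : ℝ → ℝ} {b : ℝ} (hb : 0 < b)
    (hp : ∀ t, b ≤ p t) (hx : ∀ t, HasDerivAt x (-p t * x t + u t) t)
    (hu : Tendsto u atTop (𝓝 0)) :
    Tendsto x atTop (𝓝 0) := by
  -- `2xu ≤ b x² + u²/b` turns `(x²)' = -2p x² + 2xu` into `(x²)' ≤ -b x² + u²/b`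
  have hsq : Tendsto (fun t => x t * x t) atTop (𝓝 0) := by
    refine tendsto_zero_of_deriv_le_neg_mul_add (ε := fun t => u t ^ 2 / b) hb
      (fun t => mul_self_nonneg (x t)) (fun t => (hx t).mul (hx t)) (fun t => ?_) ?_
    · have hdamp : b * (x t * x t) ≤ p t * (x t * x t) :=
        mul_le_mul_of_nonneg_right (hp t) (mul_self_nonneg _)
      have hyoung : 0 ≤ b * (x t * x t) + u t ^ 2 / b - 2 * x t * u t := by
        have : b * (x t * x t) + u t ^ 2 / b - 2 * x t * u t = (b * x t - u t) ^ 2 / b := by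
          field_simp
          ring
        rw [this]
        positivity
      linarith
    · simpa using (hu.pow 2).div_const b
  rw [tendsto_zero_iff_abs_tendsto_zero]
  simpa [Function.comp_def, sqrt_mul_self_eq_abs] using hsq.sqrt

theorem tendsto_zero_of_hasDerivAt_neg_mul_self {y : ℝ → ℝ} {a : ℝ} (ha : 0 < a)
    (hy : ∀ t, HasDerivAt y (-a * y t) t) :
    Tendsto y atTop (𝓝 0) :=
  tendsto_zero_of_hasDerivAt_neg_mul_add ha (fun _ => le_rfl)
    (fun t => (hy t).congr_deriv (add_zero _).symm) tendsto_const_nhds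

/-- With `k₁ = k₂ = 0` the error system decouples; the driven SoC error converges to zero. -/
theorem stmt_4 (R1 C1 R2 C2 k3 gmin : ℝ)
    (hR1 : 0 < R1) (hC1 : 0 < C1) (hR2 : 0 < R2) (hC2 : 0 < C2)
    (hk3 : 0 < k3) (hgmin : 0 < gmin)
    (g : ℝ → ℝ) (hg : ∀ t, gmin ≤ g t)
    (x1 x2 x3 : ℝ → ℝ)
    (h1 : ∀ t, HasDerivAt x1 (-(1 / (R1 * C1)) * x1 t) t)
    (h2 : ∀ t, HasDerivAt x2 (-(1 / (R2 * C2)) * x2 t) t)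
    (h3 : ∀ t, HasDerivAt x3 (-k3 * g t * x3 t + k3 * (x1 t + x2 t)) t) :
    (∀ t, x1 t = x1 0 * Real.exp (-t / (R1 * C1))) ∧
    (∀ t, x2 t = x2 0 * Real.exp (-t / (R2 * C2))) ∧
    Filter.Tendsto x3 Filter.atTop (nhds 0) := by
  refine ⟨fun t => ?_, fun t => ?_, ?_⟩
  · rw [eq_mul_exp_neg_mul_of_hasDerivAt h1 t, neg_div, one_div_mul_eq_div]
  · rw [eq_mul_exp_neg_mul_of_hasDerivAt h2 t, neg_div, one_div_mul_eq_div]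
  have hx1 := tendsto_zero_of_hasDerivAt_neg_mul_self (by positivity) h1
  have hx2 := tendsto_zero_of_hasDerivAt_neg_mul_self (by positivity) h2
  refine tendsto_zero_of_hasDerivAt_neg_mul_add (p := fun t => k3 * g t)
    (u := fun t => k3 * (x1 t + x2 t)) (mul_pos hk3 hgmin)
    (fun t => mul_le_mul_of_nonneg_left (hg t) hk3.le)
    (fun t => (h3 t).congr_deriv (by ring)) ?_
  simpa using (hx1.add hx2).const_mul k3
end
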